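/- Under the hypotheses of the previous context (q = q̃ not assumed), if additionally P₁₁(x,λ) ≡ 1 and P₁₂(x,λ) ≡ 0 for all x ∈ [0,a] and all λ, then Φ(x,λ) = Φ̃(x,λ) and S(x,λ) = S̃(x,λ) for all x, λ, and consequently q = q̃ almost everywhere on [0,a]. -/

import Mathlib

/-! The Wronskian of `Φ̃` and `S̃` is constant, equal to `1`, so the relations `P₁₁ = 1`, `P₁₂ = 0`
form a linear system whose unique solution is `Φ = Φ̃`, `S = S̃`. Comparing second derivatives at
`λ = 0` then gives `(q - q̃) Φ = (q - q̃) S = 0` a.e., and `Φ`, `S` never vanish simultaneously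
because `P₁₁ = 1`. -/

open MeasureTheory Filter Complex Set Topology

noncomputable section

/-- `y` solves `-y'' + q y = lam * y` on the set `s` (a.e.), with `y`, `y'`
absolutely continuous (here: differentiable with differentiable derivative). -/
def SolvesOn (q : ℝ → ℂ) (lam : ℂ) (y : ℝ → ℂ) (s : Set ℝ) : Prop :=
  DifferentiableOn ℝ y s ∧ DifferentiableOn ℝ (deriv y) s ∧
  ∀ᵐ x ∂(volume.restrict s), deriv (deriv y) x = (q x - lam) * y x

/-- The potential `q` satisfies `∫₀^∞ (1+x)|q(x)| dx < ∞`. -/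
def JostPot (q : ℝ → ℝ) : Prop :=
  IntegrableOn (fun x : ℝ => (1 + x) * |q x|) (Set.Ici 0) volume

/-- `e` is the Jost solution of `-y'' + q y = ρ² y` on `[0,∞)`:
`e(x)·exp(-iρx) → 1` and `e'(x)·exp(-iρx) → iρ` as `x → ∞`. -/
def IsJost (q : ℝ → ℝ) (ρ : ℂ) (e : ℝ → ℂ) : Prop :=
  SolvesOn (fun x : ℝ => (q x : ℂ)) (ρ ^ 2) e (Set.Ici 0) ∧
  Tendsto (fun x : ℝ => e x * Complex.exp (-(Complex.I * ρ * (x : ℂ)))) atTop (𝓝 1) ∧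
  Tendsto (fun x : ℝ => deriv e x * Complex.exp (-(Complex.I * ρ * (x : ℂ)))) atTop
    (𝓝 (Complex.I * ρ))

def wronskian (y z : ℝ → ℂ) (x : ℝ) : ℂ :=
  y x * deriv z x - deriv y x * z x

theorem constant_of_hasDerivAt_ae_zero {E : Type*} [NormedAddCommGroup E] [NormedSpace ℝ E]
    [CompleteSpace E] {a b : ℝ} {f g : ℝ → E} (hf : ContinuousOn f (Icc a b))
    (hderiv : ∀ x ∈ Ioo a b, HasDerivAt f (g x) x)
    (hg : ∀ᵐ x ∂(volume.restrict (Icc a b)), g x = 0) :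
    ∀ x ∈ Icc a b, f x = f a := by
  intro x hx
  have hg' : ∀ᵐ y ∂(volume.restrict (Ioc a x)), g y = 0 :=
    ae_restrict_of_ae_restrict_of_subset (Ioc_subset_Icc_self.trans (Icc_subset_Icc_right hx.2)) hg
  have hint : IntervalIntegrable g volume a x := by
    rw [intervalIntegrable_iff_integrableOn_Ioc_of_le hx.1]
    exact (integrable_zero _ _ _).congr (EventuallyEq.symm hg')
  have hftc := intervalIntegral.integral_eq_sub_of_hasDeriv_right_of_le hx.1
    (hf.mono (Icc_subset_Icc_right hx.2))
    (fun y hy => (hderiv y ⟨hy.1, hy.2.trans_le hx.2⟩).hasDerivWithinAt) hint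
  rw [intervalIntegral.integral_of_le hx.1, integral_eq_zero_of_ae hg'] at hftc
  exact sub_eq_zero.mp hftc.symm

theorem deriv_deriv_eq_of_eqOn_Icc {F : Type*} [NormedAddCommGroup F] [NormedSpace ℝ F]
    {f g : ℝ → F} {a b x : ℝ} (heq : EqOn f g (Icc a b)) (hx : x ∈ Ioo a b) :
    deriv (deriv f) x = deriv (deriv g) x :=
  (eventuallyEq_of_mem (Icc_mem_nhds hx.1 hx.2) heq).deriv.deriv_eq

namespace SolvesOn

variable {q : ℝ → ℂ} {lam : ℂ} {y z : ℝ → ℂ} {a b : ℝ}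

theorem hasDerivAt_wronskian (hy : SolvesOn q lam y (Icc a b)) (hz : SolvesOn q lam z (Icc a b))
    {x : ℝ} (hx : x ∈ Ioo a b) :
    HasDerivAt (wronskian y z)
      (y x * deriv (deriv z) x - deriv (deriv y) x * z x) x := by
  have hnhds : Icc a b ∈ 𝓝 x := Icc_mem_nhds hx.1 hx.2
  have hasDeriv {f : ℝ → ℂ} (hf : DifferentiableOn ℝ f (Icc a b)) : HasDerivAt f (deriv f x) x :=
    ((hf x (Ioo_subset_Icc_self hx)).differentiableAt hnhds).hasDerivAt
  exact ((hasDeriv hy.1).mul (hasDeriv hz.2.1)).sub ((hasDeriv hy.2.1).mul (hasDeriv hz.1))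
    |>.congr_deriv (by ring)

theorem wronskian_constant (hy : SolvesOn q lam y (Icc a b)) (hz : SolvesOn q lam z (Icc a b)) :
    ∀ x ∈ Icc a b, wronskian y z x = wronskian y z a := by
  refine constant_of_hasDerivAt_ae_zero ?_ (fun x hx => hy.hasDerivAt_wronskian hz hx) ?_
  · exact (hy.1.continuousOn.mul hz.2.1.continuousOn).sub
      (hy.2.1.continuousOn.mul hz.1.continuousOn)
  · filter_upwards [hy.2.2, hz.2.2] with x hy'' hz''
    rw [hy'', hz'']
    ring

theorem ae_eq_or_eq_zero {q' : ℝ → ℂ} (hy : SolvesOn q lam y (Icc a b))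
    (hz : SolvesOn q' lam z (Icc a b)) (heq : EqOn y z (Icc a b)) :
    ∀ᵐ x ∂(volume.restrict (Icc a b)), q x = q' x ∨ y x = 0 := by
  have hIoo : ∀ᵐ x ∂(volume.restrict (Icc a b)), x ∈ Ioo a b := by
    rw [Measure.restrict_congr_set Ioo_ae_eq_Icc.symm]
    exact ae_restrict_mem measurableSet_Ioo
  filter_upwards [hy.2.2, hz.2.2, hIoo] with x hy'' hz'' hx
  have hyx : (q x - lam) * y x = (q' x - lam) * y x := by
    rw [← hy'', deriv_deriv_eq_of_eqOn_Icc heq hx, hz'', heq (Ioo_subset_Icc_self hx)]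
  have : (q x - q' x) * y x = 0 := by linear_combination hyx
  exact (mul_eq_zero.mp this).imp_left sub_eq_zero.mp

end SolvesOn

-- Cramer's rule for the linear system `h₁₁`, `h₁₂` in `(φ, s)`, whose determinant is `hW`.
theorem eq_and_eq_of_wronskian_eq_one {R : Type*} [CommRing R] {φ s ψ ψ' t t' : R}
    (h₁₁ : φ * t' - ψ' * s = 1) (h₁₂ : ψ * s - φ * t = 0) (hW : ψ * t' - ψ' * t = 1) :
    φ = ψ ∧ s = t :=
  ⟨by linear_combination ψ * h₁₁ + ψ' * h₁₂ - φ * hW,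
    by linear_combination t * h₁₁ + t' * h₁₂ - s * hW⟩

theorem spectral_mapping_identity_implies_equality_general (a : ℝ) (q qt : ℝ → ℝ)
    (Φ Φt S St : ℂ → ℝ → ℂ)
    (hΦ : ∀ lam : ℂ, SolvesOn (fun x : ℝ => (q x : ℂ)) lam (Φ lam) (Set.Icc 0 a) ∧ Φ lam 0 = 1)
    (hΦt : ∀ lam : ℂ, SolvesOn (fun x : ℝ => (qt x : ℂ)) lam (Φt lam) (Set.Icc 0 a) ∧ Φt lam 0 = 1)
    (hS : ∀ lam : ℂ, SolvesOn (fun x : ℝ => (q x : ℂ)) lam (S lam) (Set.Icc 0 a) ∧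
      S lam 0 = 0 ∧ deriv (S lam) 0 = 1)
    (hSt : ∀ lam : ℂ, SolvesOn (fun x : ℝ => (qt x : ℂ)) lam (St lam) (Set.Icc 0 a) ∧
      St lam 0 = 0 ∧ deriv (St lam) 0 = 1)
    (hP11 : ∀ lam : ℂ, ∀ x ∈ Set.Icc (0:ℝ) a,
      Φ lam x * deriv (St lam) x - deriv (Φt lam) x * S lam x = 1)
    (hP12 : ∀ lam : ℂ, ∀ x ∈ Set.Icc (0:ℝ) a,
      Φt lam x * S lam x - Φ lam x * St lam x = 0) :
    (∀ lam : ℂ, ∀ x ∈ Set.Icc (0:ℝ) a, Φ lam x = Φt lam x ∧ S lam x = St lam x) ∧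
    (∀ᵐ x ∂(volume.restrict (Set.Icc (0:ℝ) a)), q x = qt x) := by
  have heq (lam : ℂ) : ∀ x ∈ Icc (0:ℝ) a, Φ lam x = Φt lam x ∧ S lam x = St lam x := by
    intro x hx
    have hW := (hΦt lam).1.wronskian_constant (hSt lam).1 x hx
    simp only [wronskian, (hΦt lam).2, (hSt lam).2.1, (hSt lam).2.2, mul_zero, sub_zero,
      mul_one] at hW
    exact eq_and_eq_of_wronskian_eq_one (hP11 lam x hx) (hP12 lam x hx) hW
  refine ⟨heq, ?_⟩
  filter_upwards [(hΦ 0).1.ae_eq_or_eq_zero (hΦt 0).1 fun x hx => (heq 0 x hx).1,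
    (hS 0).1.ae_eq_or_eq_zero (hSt 0).1 fun x hx => (heq 0 x hx).2,
    ae_restrict_mem measurableSet_Icc] with x hΦx hSx hx
  by_contra hne
  have hne' : (q x : ℂ) ≠ qt x := by exact_mod_cast hne
  have h₁₁ := hP11 0 x hx
  rw [hΦx.resolve_left hne', hSx.resolve_left hne'] at h₁₁
  simp at h₁₁

/-- if the spectral-mapping entries satisfy `P₁₁ ≡ 1` and `P₁₂ ≡ 0`,
then `Φ = Φ̃`, `S = S̃` on `[0,a]` for all `λ`, and consequently `q = q̃` a.e. on `[0,a]`. -/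
theorem spectral_mapping_identity_implies_equality (a : ℝ) (ha : 0 < a) (q qt : ℝ → ℝ)
    (hq : IntegrableOn q (Set.Icc 0 a) volume) (hqt : IntegrableOn qt (Set.Icc 0 a) volume)
    (Φ Φt S St : ℂ → ℝ → ℂ)
    (hΦ : ∀ lam : ℂ, SolvesOn (fun x : ℝ => (q x : ℂ)) lam (Φ lam) (Set.Icc 0 a) ∧ Φ lam 0 = 1)
    (hΦt : ∀ lam : ℂ, SolvesOn (fun x : ℝ => (qt x : ℂ)) lam (Φt lam) (Set.Icc 0 a) ∧ Φt lam 0 = 1)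
    (hS : ∀ lam : ℂ, SolvesOn (fun x : ℝ => (q x : ℂ)) lam (S lam) (Set.Icc 0 a) ∧
      S lam 0 = 0 ∧ deriv (S lam) 0 = 1)
    (hSt : ∀ lam : ℂ, SolvesOn (fun x : ℝ => (qt x : ℂ)) lam (St lam) (Set.Icc 0 a) ∧
      St lam 0 = 0 ∧ deriv (St lam) 0 = 1)
    (hP11 : ∀ lam : ℂ, ∀ x ∈ Set.Icc (0:ℝ) a,
      Φ lam x * deriv (St lam) x - deriv (Φt lam) x * S lam x = 1)
    (hP12 : ∀ lam : ℂ, ∀ x ∈ Set.Icc (0:ℝ) a,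
      Φt lam x * S lam x - Φ lam x * St lam x = 0) :
    (∀ lam : ℂ, ∀ x ∈ Set.Icc (0:ℝ) a, Φ lam x = Φt lam x ∧ S lam x = St lam x) ∧
    (∀ᵐ x ∂(volume.restrict (Set.Icc (0:ℝ) a)), q x = qt x) :=
  spectral_mapping_identity_implies_equality_general a q qt Φ Φt S St hΦ hΦt hS hSt hP11 hP12
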